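/- arXiv:2102.04448 — 5 statements merged into one kernel-verified Lean document; each statement's English description precedes it below -/
import Mathlib

section
/- Let φ₁, φ₂ : ℝ → ℝ be twice continuously differentiable functions with φ₁'(0) + φ₂'(0) = 0, and set α = (φ₁''(0) + φ₂''(0))/2 and β = φ₂'(0). Let μ be a probability measure on ℝ^d, let u : ℝ^d → ℝ be a bounded C² function with bounded first and second derivatives, and let v : ℝ^d → ℝ^d be a bounded continuous function. Define h(ε) = ∫ φ₁(ε u(x)) dμ(x) + ∫ φ₂(ε u(x + ε v(x))) dμ(x). Then, as ε → 0, h(ε) = (φ₁(0) + φ₂(0)) + ε² (α ∫ u(x)² dμ(x) + β ∫ ⟨∇u(x), v(x)⟩ dμ(x)) + o(ε²). -/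
/-! Expand each `φᵢ` to second order at `0` and `u` to first order along the displacement
`ε v(x)`. Since `φ₁'(0) = -φ₂'(0)`, the first-order terms cancel, and the integrand differs from
`ε² (α u² + β ⟨∇u, v⟩)` by terms that are `o(ε²)` uniformly in `x` (little-o along
`𝓝 0 ×ˢ ⊤`), because `u`, `Du`, `D²u` and `v` are bounded. A uniform `o(ε²)` bound survives
integration against a finite measure. -/

open MeasureTheory Asymptotics Filter Topology Set

theorem ContDiff.isLittleO_sub_taylor_two {φ : ℝ → ℝ} (hφ : ContDiff ℝ 2 φ) (x₀ : ℝ) :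
    (fun x => φ x - (φ x₀ + deriv φ x₀ * (x - x₀) + deriv (deriv φ) x₀ / 2 * (x - x₀) ^ 2))
      =o[𝓝 x₀] fun x => (x - x₀) ^ 2 := by
  refine (taylor_isLittleO_univ hφ).congr_left fun x => ?_
  simp only [taylorWithinEval_succ, taylor_within_zero_eval, iteratedDerivWithin_univ,
    iteratedDeriv_succ, iteratedDeriv_zero, smul_eq_mul, Nat.factorial, Nat.cast_one,
    Nat.cast_zero]
  ring

theorem Asymptotics.IsLittleO.comp_mul_of_isBigO_one {ι E : Type*} [Norm E] {l : Filter ι}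
    {r : ℝ → E} (hr : r =o[𝓝 0] fun t => t ^ 2) {s U : ι → ℝ} (hs : Tendsto s l (𝓝 0))
    (hU : U =O[l] fun _ => (1 : ℝ)) :
    (fun i => r (s i * U i)) =o[l] fun i => s i ^ 2 := by
  have hsU : (fun i => s i * U i) =O[l] s := by simpa using (isBigO_refl s l).mul hU
  exact (hr.comp_tendsto (hsU.trans_tendsto hs)).trans_isBigO (hsU.pow 2)

theorem isLittleO_integral_of_isLittleO_prod_top {ι α E F : Type*} [MeasurableSpace α]
    [NormedAddCommGroup E] [NormedSpace ℝ E] [SeminormedAddCommGroup F] {l : Filter ι}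
    {μ : Measure α} [IsFiniteMeasure μ] {f : ι × α → E} {g : ι → F}
    (hf : f =o[l ×ˢ ⊤] fun p => g p.1) :
    (fun i => ∫ x, f (i, x) ∂μ) =o[l] g := by
  refine IsLittleO.of_bound fun c hc => ?_
  set m := μ.real univ
  have hm : 0 ≤ m := measureReal_nonneg
  have hbound := hf.def (div_pos hc (by linarith) : 0 < c / (m + 1))
  rw [prod_top, eventually_comap] at hbound
  filter_upwards [hbound] with i hi
  calc ‖∫ x, f (i, x) ∂μ‖ ≤ c / (m + 1) * ‖g i‖ * m :=
        norm_integral_le_of_norm_le_const (ae_of_all _ fun x => hi (i, x) rfl)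
    _ = c * ‖g i‖ * (m / (m + 1)) := by ring
    _ ≤ c * ‖g i‖ :=
        mul_le_of_le_one_right (by positivity) (div_le_one_of_le₀ (by linarith) (by linarith))

theorem norm_sub_sub_fderiv_le_of_norm_fderiv_fderiv_le {E F : Type*} [NormedAddCommGroup E]
    [NormedSpace ℝ E] [NormedAddCommGroup F] [NormedSpace ℝ F] {f : E → F} (hf : Differentiable ℝ f)
    (hf' : Differentiable ℝ (fderiv ℝ f)) {M : ℝ} (hM : ∀ x, ‖fderiv ℝ (fderiv ℝ f) x‖ ≤ M)
    (x y : E) : ‖f y - f x - fderiv ℝ f x (y - x)‖ ≤ M * ‖y - x‖ ^ 2 := by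
  have hlip : ∀ z, ‖fderiv ℝ f z - fderiv ℝ f x‖ ≤ M * ‖z - x‖ := fun z =>
    convex_univ.norm_image_sub_le_of_norm_fderiv_le (fun z _ => hf' z) (fun z _ => hM z)
      (mem_univ x) (mem_univ z)
  have hM0 : 0 ≤ M := (norm_nonneg (fderiv ℝ (fderiv ℝ f) x)).trans (hM x)
  calc ‖f y - f x - fderiv ℝ f x (y - x)‖ ≤ M * ‖y - x‖ * ‖y - x‖ :=
        (convex_closedBall x ‖y - x‖).norm_image_sub_le_of_norm_fderiv_le'
          (fun z _ => hf z)
          (fun z hz => (hlip z).trans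
            (mul_le_mul_of_nonneg_left (mem_closedBall_iff_norm.1 hz) hM0))
          (Metric.mem_closedBall_self (norm_nonneg _)) (mem_closedBall_iff_norm.2 le_rfl)
    _ = M * ‖y - x‖ ^ 2 := by ring

theorem Continuous.integrable_comp_of_abs_le {α : Type*} [TopologicalSpace α]
    [MeasurableSpace α] [OpensMeasurableSpace α] {μ : Measure α} [IsFiniteMeasure μ]
    {φ : ℝ → ℝ} (hφ : Continuous φ) {f : α → ℝ} (hf : Continuous f) {M : ℝ}
    (hM : ∀ x, |f x| ≤ M) : Integrable (fun x => φ (f x)) μ := by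
  obtain ⟨C, hC⟩ := (isCompact_Icc (a := -M) (b := M)).exists_bound_of_continuousOn
    hφ.continuousOn
  exact .of_bound (hφ.comp hf).aestronglyMeasurable C
    (ae_of_all _ fun x => hC _ (abs_le.1 (hM x)))

section UniformExpansion

variable {E : Type*} [NormedAddCommGroup E] [NormedSpace ℝ E] {u : E → ℝ} {v : E → E}
  {l : Filter (ℝ × E)} {Mv : ℝ}

theorem isBigO_comp_add_smul_sub (hu : Differentiable ℝ u) {M : ℝ}
    (hM : ∀ x, ‖fderiv ℝ u x‖ ≤ M) (hv : ∀ x, ‖v x‖ ≤ Mv) :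
    (fun p : ℝ × E => u (p.2 + p.1 • v p.2) - u p.2) =O[l] fun p => p.1 := by
  refine .of_bound (M * Mv) (.of_forall fun p => ?_)
  have hM0 : 0 ≤ M := (norm_nonneg _).trans (hM 0)
  calc ‖u (p.2 + p.1 • v p.2) - u p.2‖ ≤ M * ‖p.2 + p.1 • v p.2 - p.2‖ :=
        convex_univ.norm_image_sub_le_of_norm_fderiv_le (fun z _ => hu z) (fun z _ => hM z)
          (mem_univ _) (mem_univ _)
    _ ≤ M * (Mv * ‖p.1‖) := by
        rw [add_sub_cancel_left, norm_smul, mul_comm ‖p.1‖]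
        gcongr
        exact hv p.2
    _ = M * Mv * ‖p.1‖ := by ring

theorem isBigO_comp_add_smul_sub_sub_fderiv (hu : Differentiable ℝ u)
    (hu' : Differentiable ℝ (fderiv ℝ u)) {M : ℝ} (hM : ∀ x, ‖fderiv ℝ (fderiv ℝ u) x‖ ≤ M)
    (hv : ∀ x, ‖v x‖ ≤ Mv) :
    (fun p : ℝ × E => u (p.2 + p.1 • v p.2) - u p.2 - p.1 * fderiv ℝ u p.2 (v p.2))
      =O[l] fun p => p.1 ^ 2 := by
  refine .of_bound (M * Mv ^ 2) (.of_forall fun p => ?_)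
  have hM0 : 0 ≤ M := (norm_nonneg (fderiv ℝ (fderiv ℝ u) 0)).trans (hM 0)
  calc ‖u (p.2 + p.1 • v p.2) - u p.2 - p.1 * fderiv ℝ u p.2 (v p.2)‖
      ≤ M * ‖p.2 + p.1 • v p.2 - p.2‖ ^ 2 := by
        simpa using
          norm_sub_sub_fderiv_le_of_norm_fderiv_fderiv_le hu hu' hM p.2 (p.2 + p.1 • v p.2)
    _ ≤ M * (Mv * ‖p.1‖) ^ 2 := by
        rw [add_sub_cancel_left, norm_smul, mul_comm ‖p.1‖]
        gcongr
        exact hv p.2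
    _ = M * Mv ^ 2 * ‖p.1 ^ 2‖ := by rw [norm_pow]; ring

end UniformExpansion

theorem isLittleO_gan_integrand {E : Type*} [NormedAddCommGroup E] [NormedSpace ℝ E]
    {φ₁ φ₂ : ℝ → ℝ} (hφ₁ : ContDiff ℝ 2 φ₁) (hφ₂ : ContDiff ℝ 2 φ₂)
    (hfirst : deriv φ₁ 0 + deriv φ₂ 0 = 0) {u : E → ℝ} (hu : ContDiff ℝ 2 u) {v : E → E}
    {M₀ M₁ M₂ Mv : ℝ} (hM₀ : ∀ x, |u x| ≤ M₀) (hM₁ : ∀ x, ‖fderiv ℝ u x‖ ≤ M₁)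
    (hM₂ : ∀ x, ‖fderiv ℝ (fderiv ℝ u) x‖ ≤ M₂) (hv : ∀ x, ‖v x‖ ≤ Mv) :
    (fun p : ℝ × E => φ₁ (p.1 * u p.2) + φ₂ (p.1 * u (p.2 + p.1 • v p.2)) - (φ₁ 0 + φ₂ 0)
      - p.1 ^ 2 * ((deriv (deriv φ₁) 0 + deriv (deriv φ₂) 0) / 2 * u p.2 ^ 2
        + deriv φ₂ 0 * fderiv ℝ u p.2 (v p.2))) =o[𝓝 0 ×ˢ ⊤] fun p => p.1 ^ 2 := by
  have hε : Tendsto (fun p : ℝ × E => p.1) (𝓝 0 ×ˢ ⊤) (𝓝 0) := tendsto_fst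
  have hu₁ : Differentiable ℝ u := hu.differentiable two_ne_zero
  have hu₂ : Differentiable ℝ (fderiv ℝ u) :=
    (hu.fderiv_right (m := 1) le_rfl).differentiable one_ne_zero
  have hU : (fun p : ℝ × E => u p.2) =O[𝓝 0 ×ˢ ⊤] fun _ => (1 : ℝ) :=
    .of_bound M₀ (.of_forall fun p => by simpa using hM₀ p.2)
  have hW : (fun p : ℝ × E => u (p.2 + p.1 • v p.2)) =O[𝓝 0 ×ˢ ⊤] fun _ => (1 : ℝ) :=
    .of_bound M₀ (.of_forall fun p => by simpa using hM₀ _)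
  have hT₁ := hφ₁.isLittleO_sub_taylor_two 0
  have hT₂ := hφ₂.isLittleO_sub_taylor_two 0
  simp only [sub_zero] at hT₁ hT₂
  have hlin : (fun p : ℝ × E => p.1 * (u (p.2 + p.1 • v p.2) - u p.2
      - p.1 * fderiv ℝ u p.2 (v p.2))) =o[𝓝 0 ×ˢ ⊤] fun p => p.1 ^ 2 := by
    simpa using (isLittleO_one_iff ℝ |>.2 hε).mul_isBigO
      (isBigO_comp_add_smul_sub_sub_fderiv hu₁ hu₂ hM₂ hv)
  have hsq : (fun p : ℝ × E => p.1 ^ 2 * ((u (p.2 + p.1 • v p.2) - u p.2)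
      * (u (p.2 + p.1 • v p.2) + u p.2))) =o[𝓝 0 ×ˢ ⊤] fun p => p.1 ^ 2 := by
    have hdiff := (isBigO_comp_add_smul_sub hu₁ hM₁ hv).trans_tendsto hε
    simpa using (isBigO_refl (fun p : ℝ × E => p.1 ^ 2) _).mul_isLittleO
      ((isLittleO_one_iff ℝ |>.2 hdiff).mul_isBigO (hW.add hU))
  -- With U = u x, W = u (x + ε v x) and rᵢ the second-order Taylor remainder of φᵢ at 0,
  -- the integrand is r₁(εU) + r₂(εW) + φ₂'(0) ε (W - U - ε Du(v)) + φ₂''(0)/2 ε² (W - U)(W + U).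
  refine ((((hT₁.comp_mul_of_isBigO_one hε hU).add (hT₂.comp_mul_of_isBigO_one hε hW)).add
    (hlin.const_mul_left (deriv φ₂ 0))).add
    (hsq.const_mul_left (deriv (deriv φ₂) 0 / 2))).congr_left fun p => ?_
  rw [show deriv φ₁ 0 = -deriv φ₂ 0 by linarith]
  ring

/-- Second-order (linearized GAN) approximation of the GAN objective around the
Nash equilibrium `D* = 0`: with discriminator perturbation `ε u` and generator
perturbation (in data space) `ε v`,
`h(ε) = ∫ φ₁(ε u) dμ + ∫ φ₂(ε u(x + ε v x)) dμ
       = (φ₁ 0 + φ₂ 0) + ε² (α ∫ u² dμ + β ∫ ⟨∇u, v⟩ dμ) + o(ε²)`. -/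
theorem second_order_gan_approximation {d : ℕ} (φ₁ φ₂ : ℝ → ℝ)
    (hφ₁ : ContDiff ℝ 2 φ₁) (hφ₂ : ContDiff ℝ 2 φ₂)
    (hfirst : deriv φ₁ 0 + deriv φ₂ 0 = 0)
    (α β : ℝ)
    (hα : α = (deriv (deriv φ₁) 0 + deriv (deriv φ₂) 0) / 2)
    (hβ : β = deriv φ₂ 0)
    (μ : Measure (EuclideanSpace ℝ (Fin d))) [IsProbabilityMeasure μ]
    (u : EuclideanSpace ℝ (Fin d) → ℝ) (hu : ContDiff ℝ 2 u)
    (hub : ∃ M, ∀ x, |u x| ≤ M)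
    (hub1 : ∃ M, ∀ x, ‖fderiv ℝ u x‖ ≤ M)
    (hub2 : ∃ M, ∀ x, ‖fderiv ℝ (fderiv ℝ u) x‖ ≤ M)
    (v : EuclideanSpace ℝ (Fin d) → EuclideanSpace ℝ (Fin d))
    (hvc : Continuous v) (hvb : ∃ M, ∀ x, ‖v x‖ ≤ M)
    (h : ℝ → ℝ)
    (hh : ∀ ε : ℝ, h ε = (∫ x, φ₁ (ε * u x) ∂μ) + ∫ x, φ₂ (ε * u (x + ε • v x)) ∂μ) :
    (fun ε : ℝ => h ε - (φ₁ 0 + φ₂ 0)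
        - ε ^ 2 * (α * (∫ x, (u x) ^ 2 ∂μ)
          + β * ∫ x, (inner ℝ (gradient u x) (v x) : ℝ) ∂μ))
      =o[nhds 0] fun ε : ℝ => ε ^ 2 := by
  obtain ⟨M₀, hM₀⟩ := hub
  obtain ⟨M₁, hM₁⟩ := hub1
  obtain ⟨M₂, hM₂⟩ := hub2
  obtain ⟨Mv, hMv⟩ := hvb
  subst hα hβ
  refine (isLittleO_integral_of_isLittleO_prod_top (μ := μ)
    (isLittleO_gan_integrand hφ₁ hφ₂ hfirst hu hM₀ hM₁ hM₂ hMv)).congr'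
    (.of_forall fun ε => ?_) .rfl
  have hεu : ∀ y, |ε * u y| ≤ |ε| * M₀ := fun y =>
    (abs_mul ε (u y)).trans_le (mul_le_mul_of_nonneg_left (hM₀ y) (abs_nonneg ε))
  have hi₁ : Integrable (fun x => φ₁ (ε * u x)) μ :=
    hφ₁.continuous.integrable_comp_of_abs_le (by fun_prop) hεu
  have hi₂ : Integrable (fun x => φ₂ (ε * u (x + ε • v x))) μ :=
    hφ₂.continuous.integrable_comp_of_abs_le (by fun_prop) fun x => hεu _
  have hiU : Integrable (fun x => u x ^ 2) μ :=
    (continuous_pow 2).integrable_comp_of_abs_le hu.continuous hM₀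
  have hiD : Integrable (fun x => fderiv ℝ u x (v x)) μ :=
    .of_bound ((hu.continuous_fderiv two_ne_zero).clm_apply hvc).aestronglyMeasurable (M₁ * Mv)
      (ae_of_all _ fun x => (fderiv ℝ u x).le_of_opNorm_le_of_le (hM₁ x) (hMv x))
  have hgrad : ∀ x, inner ℝ (gradient u x) (v x) = fderiv ℝ u x (v x) := fun x => by
    rw [← toDual_gradient, InnerProductSpace.toDual_apply_apply]
  simp only [hh, hgrad]
  rw [integral_sub, integral_sub, integral_add hi₁ hi₂, integral_const, probReal_univ, one_smul,
    integral_const_mul, integral_add, integral_const_mul, integral_const_mul]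
  exacts [hiU.const_mul _, hiD.const_mul _, hi₁.add hi₂, integrable_const _,
    (hi₁.add hi₂).sub (integrable_const _), ((hiU.const_mul _).add (hiD.const_mul _)).const_mul _]
end

section
/- Let ρ : ℝ^d → ℝ be a smooth positive density, let α, β, ξ, and λ be real or complex numbers with λ ≠ 0, and let w : ℝ^d → ℝ be a smooth function satisfying the weighted Laplacian eigenvalue equation ∇·(ρ(x) ∇w(x)) = −ξ ρ(x) w(x) for all x. If λ² + α λ + β² ξ = 0, then the pair (u, v) = (w, (β/λ) ∇w) satisfies the strong-form linearized GAN eigenvalue system: −α ρ(x) u(x) + β ∇·(ρ(x) v(x)) = λ ρ(x) u(x) and β ρ(x) ∇u(x) = λ ρ(x) v(x) for all x ∈ ℝ^d. -/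
/-- The divergence `∇ · F` of a vector field `F` on `ℝ^d`. -/
noncomputable def vdiv {d : ℕ}
    (F : EuclideanSpace ℝ (Fin d) → EuclideanSpace ℝ (Fin d))
    (x : EuclideanSpace ℝ (Fin d)) : ℝ :=
  ∑ i, fderiv ℝ F x (EuclideanSpace.single i 1) i

lemma vdiv_const_smul {d : ℕ}
    (F : EuclideanSpace ℝ (Fin d) → EuclideanSpace ℝ (Fin d)) (c : ℝ)
    (x : EuclideanSpace ℝ (Fin d)) (hF : DifferentiableAt ℝ F x) :
    vdiv (fun y => c • F y) x = c * vdiv F x := by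
  unfold vdiv
  rw [Finset.mul_sum]
  congr 1
  ext i
  rw [fderiv_fun_const_smul hF c]
  simp

lemma differentiable_gradient {d : ℕ} (w : EuclideanSpace ℝ (Fin d) → ℝ)
    (hw : ContDiff ℝ (⊤ : ℕ∞) w) : Differentiable ℝ (fun y => gradient w y) := by
  have h1 : ContDiff ℝ 1 (fderiv ℝ w) := hw.fderiv_right (by exact WithTop.coe_le_coe.mpr le_top)
  have h2 : Differentiable ℝ (fderiv ℝ w) := h1.differentiable one_ne_zero
  have : (fun y => gradient w y)
      = fun y => (InnerProductSpace.toDual ℝ (EuclideanSpace ℝ (Fin d))).symm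
          (fderiv ℝ w y) := rfl
  rw [this]
  exact (InnerProductSpace.toDual ℝ (EuclideanSpace ℝ (Fin d))).symm.toContinuousLinearMap.differentiable.comp h2

/-- Forward direction of the spectrum theorem for the linearized GAN: if `w`
is an eigenfunction of the weighted Laplacian, `∇·(ρ ∇w) = −ξ ρ w`, and
`λ² + α λ + β² ξ = 0` with `λ ≠ 0`, then `(u, v) = (w, (β/λ) ∇w)` solves the
strong-form linearized GAN eigenvalue system
`−α ρ u + β ∇·(ρ v) = λ ρ u` and `β ρ ∇u = λ ρ v`. -/
theorem lgan_eigenfunction_of_laplacian_eigenfunction {d : ℕ}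
    (ρ : EuclideanSpace ℝ (Fin d) → ℝ) (hρ : ContDiff ℝ (⊤ : ℕ∞) ρ)
    (hρpos : ∀ x, 0 < ρ x)
    (α β ξ lam : ℝ) (hlam : lam ≠ 0)
    (w : EuclideanSpace ℝ (Fin d) → ℝ) (hw : ContDiff ℝ (⊤ : ℕ∞) w)
    (heig : ∀ x, vdiv (fun y => ρ y • gradient w y) x = -ξ * (ρ x * w x))
    (hquad : lam ^ 2 + α * lam + β ^ 2 * ξ = 0)
    (u : EuclideanSpace ℝ (Fin d) → ℝ)
    (v : EuclideanSpace ℝ (Fin d) → EuclideanSpace ℝ (Fin d))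
    (hu : u = w) (hv : v = fun x => (β / lam) • gradient w x) :
    (∀ x, -α * (ρ x * u x) + β * vdiv (fun y => ρ y • v y) x = lam * (ρ x * u x)) ∧
    (∀ x, β • ρ x • gradient u x = lam • ρ x • v x) := by
  subst hu hv
  have hρw : Differentiable ℝ (fun y => ρ y • gradient u y) :=
    (hρ.differentiable (by simp)).smul (differentiable_gradient u hw)
  constructor
  · intro x
    have h1 : (fun y => ρ y • (β / lam) • gradient u y)
        = fun y => (β / lam) • (ρ y • gradient u y) := by
      funext y; rw [smul_comm]
    rw [h1, vdiv_const_smul _ _ _ (hρw x), heig x]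
    field_simp
    linear_combination -(ρ x * u x) * hquad
  · intro x
    simp only [smul_smul]
    congr 1
    field_simp
end

section
/- Let α > 0, β ≠ 0 be real numbers and ξ_min > 0. Define η = Re((−α + s)/2), where s is the principal complex square root of α² − 4 β² ξ_min. Then η < 0, and for every real ξ ≥ ξ_min, every complex root λ of λ² + α λ + β² ξ = 0 satisfies Re(λ) ≤ η. -/
lemma re_cpow_half (r : ℝ) : (((r : ℂ)) ^ ((1 : ℂ) / 2)).re = Real.sqrt r := by
  rcases le_or_gt 0 r with hr | hr
  · have h2 : ((1 : ℂ) / 2) = ((1 / 2 : ℝ) : ℂ) := by norm_num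
    rw [h2, ← Complex.ofReal_cpow hr, Complex.ofReal_re, ← Real.sqrt_eq_rpow]
  · rw [Complex.ofReal_cpow_of_nonpos hr.le]
    have h1 : (-(r : ℂ)) = ((-r : ℝ) : ℂ) := by push_cast; ring
    have h2 : ((1 : ℂ) / 2) = ((1 / 2 : ℝ) : ℂ) := by norm_num
    have h3 : ((-r : ℝ) : ℂ) ^ ((1 : ℂ) / 2) = ((Real.sqrt (-r) : ℝ) : ℂ) := by
      rw [h2, ← Complex.ofReal_cpow (by linarith), ← Real.sqrt_eq_rpow]
    have h4 : Complex.exp (↑Real.pi * Complex.I * ((1 : ℂ) / 2))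
        = Complex.I := by
      have : (↑Real.pi * Complex.I * ((1 : ℂ) / 2))
          = ((Real.pi / 2 : ℝ) : ℂ) * Complex.I := by push_cast; ring
      rw [this, Complex.exp_mul_I, ← Complex.ofReal_cos, ← Complex.ofReal_sin]
      simp [Real.cos_pi_div_two, Real.sin_pi_div_two]
    rw [h1, h3, h4, Real.sqrt_eq_zero_of_nonpos hr.le]
    simp

/-- Convergence rate of the linearized GAN dynamics: with `α > 0`, `β ≠ 0`,
`ξ_min > 0` and `η = Re((−α + s)/2)` where `s` is the principal complex square
root of `α² − 4β²ξ_min`, one has `η < 0`, and for every `ξ ≥ ξ_min` every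
complex root of `λ² + αλ + β²ξ = 0` satisfies `Re λ ≤ η`. -/
theorem lgan_convergence_rate (α β ξmin : ℝ)
    (hα : 0 < α) (hβ : β ≠ 0) (hξ : 0 < ξmin) (η : ℝ)
    (hη : η = ((-(α : ℂ) + ((α ^ 2 - 4 * β ^ 2 * ξmin : ℝ) : ℂ) ^ ((1 : ℂ) / 2)) / 2).re) :
    η < 0 ∧
    ∀ ξ : ℝ, ξmin ≤ ξ → ∀ lam : ℂ,
      lam ^ 2 + (α : ℂ) * lam + ((β : ℂ) ^ 2 * (ξ : ℂ)) = 0 → lam.re ≤ η := by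
  set D : ℝ := α ^ 2 - 4 * β ^ 2 * ξmin with hD
  have hβ2 : 0 < β ^ 2 := by positivity
  have hηval : η = (-α + Real.sqrt D) / 2 := by
    have hs := re_cpow_half D
    rw [hη, show ((-(α:ℂ) + ((D:ℝ):ℂ) ^ ((1:ℂ)/2)) / 2)
        = ((-(α:ℂ) + ((D:ℝ):ℂ) ^ ((1:ℂ)/2)) / ((2:ℝ):ℂ)) by norm_num,
      Complex.div_ofReal_re, Complex.add_re, Complex.neg_re, Complex.ofReal_re, hs]
  have hsD : Real.sqrt D < α := by
    rw [Real.sqrt_lt' hα]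
    have : 0 < 4 * β ^ 2 * ξmin := by positivity
    linarith
  constructor
  · rw [hηval]; linarith
  · intro ξ hξ' lam heq
    have hre := congrArg Complex.re heq
    have him := congrArg Complex.im heq
    simp only [Complex.add_re, Complex.add_im, Complex.mul_re, Complex.mul_im,
      Complex.ofReal_re, Complex.ofReal_im, Complex.zero_re, Complex.zero_im,
      pow_two] at hre him
    -- hre : x*x - y*y + α*x + β²*ξ = 0 ; him : (x*y + y*x) + α*y = 0
    by_cases hy : lam.im = 0
    · simp only [hy] at hre
      -- x² + αx + β²ξ = 0
      have hsq : (2 * lam.re + α) ^ 2 ≤ D := by nlinarith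
      have h1 : 2 * lam.re + α ≤ Real.sqrt D := by
        calc 2 * lam.re + α ≤ |2 * lam.re + α| := le_abs_self _
        _ = Real.sqrt ((2 * lam.re + α) ^ 2) := (Real.sqrt_sq_eq_abs _).symm
        _ ≤ Real.sqrt D := Real.sqrt_le_sqrt hsq
      rw [hηval]; linarith
    · have h2 : 2 * lam.re + α = 0 := by
        have : lam.im * (2 * lam.re + α) = 0 := by nlinarith
        rcases mul_eq_zero.mp this with h | h
        · exact absurd h hy
        · exact h
      have : lam.re = -α / 2 := by linarith
      rw [hηval, this]
      have := Real.sqrt_nonneg D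
      linarith
end

section
/- Let β ≠ 0, ξ_min > 0, α ≥ 0 and γ ≥ 0 be real numbers satisfying α + γ ξ_min = 2 |β| √ξ_min. Then the discriminant condition ((α + γ ξ)² − 4 β² ξ ≥ 0 for all real ξ ≥ ξ_min) holds if and only if γ ≥ |β| / √ξ_min. -/
/-- Under the optimal-rate constraint `α + γ ξ_min = 2|β|√ξ_min` (with
`α, γ ≥ 0`, `β ≠ 0`, `ξ_min > 0`), the discriminant condition
`(α + γξ)² − 4β²ξ ≥ 0` for all `ξ ≥ ξ_min` holds iff `γ ≥ |β|/√ξ_min`. -/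
theorem lgan_no_oscillation_iff (β ξmin α γ : ℝ)
    (hβ : β ≠ 0) (hξ : 0 < ξmin) (hα : 0 ≤ α) (hγ : 0 ≤ γ)
    (hopt : α + γ * ξmin = 2 * |β| * Real.sqrt ξmin) :
    (∀ ξ : ℝ, ξmin ≤ ξ → 0 ≤ (α + γ * ξ) ^ 2 - 4 * β ^ 2 * ξ) ↔
      |β| / Real.sqrt ξmin ≤ γ := by
  set s := Real.sqrt ξmin with hsdef
  have hs0 : 0 < s := Real.sqrt_pos.mpr hξ
  have hs2 : s ^ 2 = ξmin := Real.sq_sqrt hξ.le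
  have hb : 0 < |β| := abs_pos.mpr hβ
  have habs : |β| ^ 2 = β ^ 2 := sq_abs β
  have hα' : α = 2 * |β| * s - γ * ξmin := by linarith
  have key : ∀ t : ℝ, (α + γ * (ξmin + t)) ^ 2 - 4 * β ^ 2 * (ξmin + t)
      = t * (4 * |β| * s * γ + γ ^ 2 * t - 4 * β ^ 2) := by
    intro t
    rw [hα', ← hs2]
    linear_combination (4 * s ^ 2) * habs
  constructor
  · intro h
    by_contra hlt
    push_neg at hlt
    rw [lt_div_iff₀ hs0] at hlt
    have hε : 0 < 4 * β ^ 2 - 4 * |β| * s * γ := by nlinarith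
    set t := (4 * β ^ 2 - 4 * |β| * s * γ) / (2 * (γ ^ 2 + 1)) with htdef
    have ht0 : 0 < t := by positivity
    have ht2 : (2 * (γ ^ 2 + 1)) * t = 4 * β ^ 2 - 4 * |β| * s * γ := by
      rw [htdef]; field_simp
    have h1 := h (ξmin + t) (by linarith)
    rw [key t] at h1
    nlinarith
  · intro hγ' ξ hξ'
    rw [div_le_iff₀ hs0] at hγ'
    have ht : 0 ≤ ξ - ξmin := by linarith
    have := key (ξ - ξmin)
    have h2 : ξmin + (ξ - ξmin) = ξ := by ring
    rw [h2] at this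
    rw [this]
    have h3 : 4 * β ^ 2 ≤ 4 * |β| * s * γ := by nlinarith
    have h4 : 0 ≤ γ ^ 2 * (ξ - ξmin) := by positivity
    exact mul_nonneg ht (by linarith)
end

section
/- Let α ≥ 0, β ≠ 0 and τ > 0 be real numbers. Then there exists ξ₀ > 0 such that for every real ξ ≥ ξ₀ one has α² − 4 β² ξ < 0 and every complex root λ of λ² + α λ + β² ξ = 0 satisfies |1 + τ λ| > 1. -/
/-! For `a² < 4c` the roots of `λ² + aλ + c` form a non-real conjugate pair, so `Re λ = -a/2` and
`|λ|² = c`. Hence `|1 + τλ|² = 1 - τa + τ²c`, which exceeds `1` as soon as `a < τc`. With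
`c = β²ξ`, both conditions hold once `ξ` is large. -/

theorem Complex.re_and_normSq_of_quadratic_root {a c : ℝ} (hdisc : a ^ 2 < 4 * c) {z : ℂ}
    (hz : z ^ 2 + a * z + c = 0) : 2 * z.re = -a ∧ normSq z = c := by
  have hre : z.re ^ 2 - z.im ^ 2 + a * z.re + c = 0 := by
    simpa [sq] using congrArg re hz
  have him : z.im * (2 * z.re + a) = 0 := by
    linear_combination (by simpa [sq] using congrArg im hz : _ = (0 : ℝ))
  -- a real root would give `(2 z.re + a)² = a² - 4c < 0`
  have him_ne : z.im ≠ 0 := by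
    intro h
    nlinarith [sq_nonneg (2 * z.re + a), h ▸ hre]
  have hsum : 2 * z.re + a = 0 := (mul_eq_zero.mp him).resolve_left him_ne
  refine ⟨by linarith, ?_⟩
  rw [normSq_apply]
  linear_combination (-1 : ℝ) * hre + z.re * hsum

theorem Complex.normSq_one_add_ofReal_mul (τ : ℝ) (z : ℂ) :
    normSq (1 + τ * z) = 1 + 2 * τ * z.re + τ ^ 2 * normSq z := by
  simp only [normSq_apply, add_re, add_im, one_re, one_im, re_ofReal_mul, im_ofReal_mul]
  ring

theorem Complex.one_lt_norm_one_add_mul_of_quadratic_root {a c τ : ℝ} (hτ : 0 < τ)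
    (hdisc : a ^ 2 < 4 * c) (hgrowth : a < τ * c) {z : ℂ} (hz : z ^ 2 + a * z + c = 0) :
    1 < ‖1 + τ * z‖ := by
  obtain ⟨hre, hnormSq⟩ := re_and_normSq_of_quadratic_root hdisc hz
  have : 1 < normSq (1 + τ * z) := by
    rw [normSq_one_add_ofReal_mul, hnormSq]
    nlinarith [mul_pos hτ (sub_pos.2 hgrowth)]
  rwa [← one_lt_sq_iff₀ (norm_nonneg _), Complex.sq_norm]

/-- Absolute instability of the forward Euler scheme (gradient descent-ascent
with fixed step `τ > 0`) for the linearized GAN: for `α ≥ 0`, `β ≠ 0` there is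
`ξ₀ > 0` such that for all `ξ ≥ ξ₀` the discriminant `α² − 4β²ξ` is negative
and every complex root `λ` of `λ² + αλ + β²ξ = 0` has `|1 + τλ| > 1`. -/
theorem euler_scheme_absolutely_unstable (α β τ : ℝ)
    (hα : 0 ≤ α) (hβ : β ≠ 0) (hτ : 0 < τ) :
    ∃ ξ₀ : ℝ, 0 < ξ₀ ∧ ∀ ξ : ℝ, ξ₀ ≤ ξ →
      α ^ 2 - 4 * β ^ 2 * ξ < 0 ∧
      ∀ lam : ℂ, lam ^ 2 + (α : ℂ) * lam + ((β : ℂ) ^ 2 * (ξ : ℂ)) = 0 →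
        1 < ‖1 + (τ : ℂ) * lam‖ := by
  have hβ2 : 0 < β ^ 2 := by positivity
  refine ⟨(α ^ 2 / 4 + α / τ + 1) / β ^ 2, by positivity, fun ξ hξ => ?_⟩
  have hc : α ^ 2 / 4 + α / τ + 1 ≤ β ^ 2 * ξ := by
    rwa [div_le_iff₀ hβ2, mul_comm] at hξ
  have hdisc : α ^ 2 < 4 * (β ^ 2 * ξ) := by
    nlinarith [div_nonneg hα hτ.le]
  have hgrowth : α < τ * (β ^ 2 * ξ) := by
    calc α < τ * (α ^ 2 / 4 + α / τ + 1) := by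
          rw [mul_add, mul_add, mul_div_cancel₀ _ hτ.ne']
          nlinarith [sq_nonneg α]
      _ ≤ τ * (β ^ 2 * ξ) := by gcongr
  exact ⟨by linarith, fun lam hlam =>
    Complex.one_lt_norm_one_add_mul_of_quadratic_root hτ hdisc hgrowth (by exact_mod_cast hlam)⟩
end
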